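/- arXiv:2205.10443 — 2 statements merged into one kernel-verified Lean document; each statement's English description precedes it below -/
import Mathlib

section
/- Let G and H be locally compact Hausdorff topological groups, and suppose G can be covered by a family of compact subsets of cardinality strictly less than the continuum 𝔠 = 2^ℵ₀. Then every continuous surjective group homomorphism φ : G → H is an open map. -/
/-- `G` is a union of fewer than `𝔠` compact subsets. -/
def SigmaCompactLtContinuum (G : Type*) [TopologicalSpace G] : Prop :=
  ∃ 𝒦 : Set (Set G), Cardinal.mk 𝒦 < Cardinal.continuum ∧
    (∀ K ∈ 𝒦, IsCompact K) ∧ ⋃₀ 𝒦 = Set.univ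

/-!
Let `U` be the open subgroup of `G` generated by a compact neighbourhood of `1`; it is
σ-compact, so by the σ-compact open mapping theorem `φ` is open as soon as the σ-compact
subgroup `φ(U)` is open in `H`. As every compact subset of `G` meets only finitely many cosets
of `U`, the subgroup `φ(U)` has fewer than `𝔠` cosets. If `φ(U)` were not open, it would be a
countable union of closed nowhere dense sets, and a Mycielski-type Cantor scheme in the locally
compact group `H` would produce `𝔠` points whose pairwise quotients `x⁻¹ * y` avoid `φ(U)`,
that is, `𝔠` distinct cosets.
-/

open Set Filter Function Topology Pointwise
open scoped Cardinal

universe u v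

theorem Submonoid.coe_closure_eq_iUnion_pow {M : Type*} [Monoid M] (s : Set M) :
    (closure s : Set M) = ⋃ n : ℕ, s ^ n := by
  refine Subset.antisymm (fun x hx => ?_) (iUnion_subset fun n => pow_subset subset_closure)
  induction hx using closure_induction with
  | mem x hx => exact mem_iUnion.2 ⟨1, by simpa using hx⟩
  | one => exact mem_iUnion.2 ⟨0, by simp⟩
  | mul x y _ _ hx hy =>
    obtain ⟨m, hm⟩ := mem_iUnion.1 hx
    obtain ⟨n, hn⟩ := mem_iUnion.1 hy
    exact mem_iUnion.2 ⟨m + n, pow_add s m n ▸ mul_mem_mul hm hn⟩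

theorem IsCompact.pow {M : Type*} [TopologicalSpace M] [Monoid M] [ContinuousMul M] {K : Set M}
    (hK : IsCompact K) (n : ℕ) : IsCompact (K ^ n) := by
  induction n with
  | zero => simp
  | succ n ih => simpa only [pow_succ] using ih.mul hK

section TopologicalGroup

variable {G : Type*} [TopologicalSpace G] [Group G] [IsTopologicalGroup G]

theorem IsCompact.isSigmaCompact_subgroupClosure {K : Set G} (hK : IsCompact K) :
    IsSigmaCompact (Subgroup.closure K : Set G) := by
  rw [← Subgroup.coe_toSubmonoid, Subgroup.closure_toSubmonoid,
    Submonoid.coe_closure_eq_iUnion_pow]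
  exact isSigmaCompact_iUnion_of_isCompact _ fun n => (hK.union hK.inv).pow n

variable (G) in
theorem exists_isOpen_isSigmaCompact_subgroup [WeaklyLocallyCompactSpace G] :
    ∃ U : Subgroup G, IsOpen (U : Set G) ∧ IsSigmaCompact (U : Set G) := by
  obtain ⟨K, hK, hK1⟩ := exists_compact_mem_nhds (1 : G)
  exact ⟨Subgroup.closure K,
    (Subgroup.closure K).isOpen_of_mem_nhds (mem_of_superset hK1 Subgroup.subset_closure),
    hK.isSigmaCompact_subgroupClosure⟩

theorem Subgroup.interior_eq_empty_of_not_isOpen {P : Subgroup G} (hP : ¬IsOpen (P : Set G)) :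
    interior (P : Set G) = ∅ :=
  eq_empty_of_forall_notMem fun _ hg => hP (P.isOpen_of_mem_nhds (mem_interior_iff_mem_nhds.1 hg))

end TopologicalGroup

open Cardinal in
theorem SigmaCompactLtContinuum.mk_lt_continuum_of_isLocallyConstant
    {X : Type u} {Y : Type v} [TopologicalSpace X] (hX : SigmaCompactLtContinuum X)
    {f : X → Y} (hf : IsLocallyConstant f) (hsurj : Surjective f) : #Y < 𝔠 := by
  let : TopologicalSpace Y := ⊥
  have : DiscreteTopology Y := ⟨rfl⟩
  obtain ⟨𝒦, hcard, hcomp, hcover⟩ := hX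
  have hY : ⋃ K ∈ 𝒦, f '' K = Set.univ := by
    rw [← image_iUnion₂, ← sUnion_eq_biUnion, hcover, image_univ_of_surjective hsurj]
  have hfin : ∀ K : 𝒦, lift.{u} #(f '' K) ≤ ℵ₀ := fun K =>
    lift_le_aleph0.2 <| le_aleph0_iff_set_countable.2
      ((hcomp K K.2).image hf.continuous).finite_of_discrete.countable
  have hle := mk_biUnion_le_lift (fun K => f '' K) 𝒦
  rw [hY, mk_univ] at hle
  rw [← lift_lt_continuum.{v, u}]
  exact hle.trans_lt <| mul_lt_of_lt aleph0_le_continuum (lift_lt_continuum.2 hcard)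
    ((ciSup_le' hfin).trans_lt aleph0_lt_continuum)

structure IsSeparatedShrinking {X ι : Type*} [TopologicalSpace X] (r : X → X → Prop)
    (O O' : ι → Set X) : Prop where
  isOpen (i : ι) : IsOpen (O' i)
  nonempty (i : ι) : (O' i).Nonempty
  isCompact_closure (i : ι) : IsCompact (closure (O' i))
  closure_subset (i : ι) : closure (O' i) ⊆ O i
  separated {i j : ι} (hij : i ≠ j) {a b : X} (ha : a ∈ closure (O' i))
    (hb : b ∈ closure (O' j)) : r a b

theorem exists_cantorFamily_of_forall_exists_isSeparatedShrinking {X : Type*}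
    [TopologicalSpace X] [Nonempty X] (r : ℕ → X → X → Prop)
    (hr : ∀ (m : ℕ) {ι : Type} [Finite ι] (O : ι → Set X), (∀ i, IsOpen (O i)) →
      (∀ i, (O i).Nonempty) → ∃ O', IsSeparatedShrinking (r m) O O') :
    ∃ p : (ℕ → Bool) → X, ∀ x y, x ≠ y → ∀ᶠ m in atTop, r m (p x) (p y) := by
  choose! next hnext using fun m (O : (Fin m → Bool) → Set X) (hO : ∀ s, IsOpen (O s))
    (hne : ∀ s, (O s).Nonempty) =>
      hr m (fun s : Fin (m + 1) → Bool => O (Fin.init s)) (fun s => hO _) (fun s => hne _)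
  let T : ∀ m, (Fin m → Bool) → Set X := fun m => Nat.rec (fun _ => univ) next m
  have hT : ∀ m, (∀ s, IsOpen (T m s)) ∧ ∀ s, (T m s).Nonempty := by
    intro m
    induction m with
    | zero => exact ⟨fun _ => isOpen_univ, fun _ => univ_nonempty⟩
    | succ m ih => exact ⟨(hnext m _ ih.1 ih.2).isOpen, (hnext m _ ih.1 ih.2).nonempty⟩
  have hshrink : ∀ m, IsSeparatedShrinking (r m) (fun s => T m (Fin.init s)) (T (m + 1)) :=
    fun m => hnext m _ (hT m).1 (hT m).2
  have hbranch : ∀ x : ℕ → Bool, (⋂ m, closure (T (m + 1) fun i => x i)).Nonempty := fun x =>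
    IsCompact.nonempty_iInter_of_sequence_nonempty_isCompact_isClosed _
      (fun m => ((hshrink (m + 1)).closure_subset _).trans subset_closure)
      (fun m => ((hshrink m).nonempty _).closure) ((hshrink 0).isCompact_closure _)
      (fun _ => isClosed_closure)
  choose p hp using hbranch
  refine ⟨p, fun x y hxy => ?_⟩
  obtain ⟨k, hk⟩ := Function.ne_iff.1 hxy
  filter_upwards [eventually_ge_atTop k] with m hm
  exact (hshrink m).separated (fun h => hk (congrFun h ⟨k, by omega⟩))
    (mem_iInter.1 (hp x) m) (mem_iInter.1 (hp y) m)

section CantorFamily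

variable {X : Type*} [TopologicalSpace X] [Group X] [IsTopologicalGroup X]

theorem dense_setOf_inv_mul_apply_notMem {ι : Type*} {D : Set X} (hD : interior D = ∅)
    {i j : ι} (hij : i ≠ j) : Dense {y : ι → X | (y i)⁻¹ * y j ∉ D} := by
  classical
  refine dense_iff_inter_open.2 fun W hW ⟨y, hy⟩ => ?_
  have hDc : Dense (((y i)⁻¹ * ·) ⁻¹' Dᶜ) :=
    (interior_eq_empty_iff_dense_compl.1 hD).preimage (isOpenMap_mul_left _)
  obtain ⟨t, htW, htD⟩ := hDc.inter_open_nonempty (update y j ⁻¹' W)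
    (hW.preimage (continuous_const.update j continuous_id)) ⟨y j, by simpa using hy⟩
  exact ⟨update y j t, htW, by simpa [update_of_ne hij] using htD⟩

theorem exists_isSeparatedShrinking_inv_mul_notMem [LocallyCompactSpace X] {ι κ : Type*}
    [Finite ι] [Finite κ] {D : κ → Set X} (hD : ∀ k, IsClosed (D k))
    (hD' : ∀ k, interior (D k) = ∅) {O : ι → Set X} (hO : ∀ i, IsOpen (O i))
    (hne : ∀ i, (O i).Nonempty) :
    ∃ O', IsSeparatedShrinking (fun a b => ∀ k, a⁻¹ * b ∉ D k) O O' := by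
  classical
  -- The separation condition is open and dense in `ι → X`, so it holds on a box around some
  -- point of `univ.pi O`; compact neighbourhoods inside that box form the shrinking.
  set S : Set (ι → X) :=
    ⋂ q : κ × {p : ι × ι // p.1 ≠ p.2}, {y | (y q.2.1.1)⁻¹ * y q.2.1.2 ∉ D q.1}
  have hSo : ∀ q : κ × {p : ι × ι // p.1 ≠ p.2},
      IsOpen {y : ι → X | (y q.2.1.1)⁻¹ * y q.2.1.2 ∉ D q.1} :=
    fun q => (hD q.1).isOpen_compl.preimage (by fun_prop)
  have hSd : Dense S := dense_iInter_of_isOpen hSo fun q =>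
    dense_setOf_inv_mul_apply_notMem (hD' q.1) q.2.2
  have hpi : IsOpen (univ.pi O) := isOpen_set_pi finite_univ fun i _ => hO i
  obtain ⟨y, hyO, hyS⟩ := hSd.inter_open_nonempty _ hpi (univ_pi_nonempty_iff.2 hne)
  obtain ⟨u, hu, huS⟩ := isOpen_pi_iff'.1 (isOpen_iInter_of_finite hSo) y hyS
  choose V hVo hyV hVu hVc using fun i => exists_open_between_and_isCompact_closure
    isCompact_singleton ((hu i).1.inter (hO i)) (singleton_subset_iff.2 ⟨(hu i).2, hyO i trivial⟩)
  refine ⟨V, hVo, fun i => ⟨y i, hyV i rfl⟩, hVc, fun i => (hVu i).trans inter_subset_right, ?_⟩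
  intro i j hij a b ha hb k
  have hab : update (update y i a) j b ∈ univ.pi u := by
    intro l _
    rcases eq_or_ne l j with rfl | hlj
    · simpa using ((hVu l) hb).1
    rcases eq_or_ne l i with rfl | hli
    · simpa [update_of_ne hlj] using ((hVu l) ha).1
    · simpa [update_of_ne hlj, update_of_ne hli] using (hu l).2
  simpa [update_of_ne hij] using mem_iInter.1 (huS hab) (k, ⟨(i, j), hij⟩)

theorem exists_cantorFamily_inv_mul_notMem [LocallyCompactSpace X] {C : ℕ → Set X}
    (hC : ∀ n, IsClosed (C n)) (hC' : ∀ n, interior (C n) = ∅) :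
    ∃ p : (ℕ → Bool) → X, ∀ x y, x ≠ y → ∀ n, (p x)⁻¹ * p y ∉ C n := by
  obtain ⟨p, hp⟩ := exists_cantorFamily_of_forall_exists_isSeparatedShrinking
    (fun m a b => ∀ k : Fin (m + 1), a⁻¹ * b ∉ C k)
    fun m _ _ _ hO hne => exists_isSeparatedShrinking_inv_mul_notMem (fun _ => hC _)
      (fun _ => hC' _) hO hne
  refine ⟨p, fun x y hxy n => ?_⟩
  obtain ⟨m, hm, hnm⟩ := ((hp x y hxy).and (eventually_ge_atTop n)).exists
  exact hm ⟨n, by omega⟩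

end CantorFamily

open Cardinal in
theorem Subgroup.isOpen_of_isSigmaCompact_of_mk_lt_continuum {H : Type u} [TopologicalSpace H]
    [Group H] [IsTopologicalGroup H] [LocallyCompactSpace H] [T2Space H] {P : Subgroup H}
    (hP : IsSigmaCompact (P : Set H)) (hindex : #(H ⧸ P) < 𝔠) : IsOpen (P : Set H) := by
  by_contra hPo
  obtain ⟨K, hK, hKP⟩ := hP
  have hKint : ∀ n, interior (K n) = ∅ := fun n => subset_empty_iff.1 <|
    (interior_mono (hKP ▸ subset_iUnion K n)).trans (P.interior_eq_empty_of_not_isOpen hPo).le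
  obtain ⟨p, hp⟩ := exists_cantorFamily_inv_mul_notMem (fun n => (hK n).isClosed) hKint
  have hinj : Injective fun x => (p x : H ⧸ P) := by
    intro x y hxy
    by_contra hne
    obtain ⟨n, hn⟩ := mem_iUnion.1 (hKP ▸ QuotientGroup.eq.1 hxy : (p x)⁻¹ * p y ∈ ⋃ n, K n)
    exact hp x y hne n hn
  have h := lift_mk_le_lift_mk_of_injective hinj
  rw [lift_uzero, mk_arrow, mk_bool, mk_nat, lift_id, lift_id, two_power_aleph0,
    lift_continuum] at h
  exact hindex.not_ge h

theorem MonoidHom.isLocallyConstant_mk_map {G H : Type*} [TopologicalSpace G] [Group G]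
    [ContinuousMul G] [Group H] (φ : G →* H) {U : Subgroup G} (hU : IsOpen (U : Set G)) :
    IsLocallyConstant fun g => (φ g : H ⧸ U.map φ) := by
  refine (IsLocallyConstant.iff_eventually_eq _).2 fun g => ?_
  have hgU : ∀ᶠ x in 𝓝 g, g⁻¹ * x ∈ U :=
    (continuous_const.mul continuous_id).continuousAt.preimage_mem_nhds
      (hU.mem_nhds (by simp))
  filter_upwards [hgU] with x hx
  simpa using QuotientGroup.mk_mul_of_mem (φ g) (Subgroup.mem_map_of_mem φ hx)

theorem MonoidHom.isOpenMap_of_isOpenMap_comp_subtype {G H : Type*} [TopologicalSpace G]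
    [Group G] [ContinuousMul G] [TopologicalSpace H] [Group H] [ContinuousMul H]
    (φ : G →* H) {U : Subgroup G} (h : IsOpenMap fun u : U => φ u) : IsOpenMap φ := by
  intro S hS
  have hS' : φ '' S = ⋃ g : G, φ g • (fun u : U => φ u) '' {u | g * u ∈ S} := by
    ext y
    simp only [mem_image, mem_iUnion, mem_smul_set, mem_ofPred_eq]
    constructor
    · rintro ⟨g, hg, rfl⟩
      exact ⟨g, 1, ⟨1, by simpa using hg, map_one φ⟩, mul_one _⟩
    · rintro ⟨g, _, ⟨u, hu, rfl⟩, rfl⟩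
      exact ⟨g * u, hu, by simp⟩
  rw [hS']
  exact isOpen_iUnion fun g =>
    (h _ ((hS.preimage (continuous_const_mul g)).preimage continuous_subtype_val)).smul _

theorem open_mapping_lt_continuum_compact_general
    {G H : Type*} [TopologicalSpace G] [Group G] [IsTopologicalGroup G]
    [LocallyCompactSpace G]
    [TopologicalSpace H] [Group H] [IsTopologicalGroup H]
    [LocallyCompactSpace H] [T2Space H]
    (hG : SigmaCompactLtContinuum G)
    (φ : G →* H) (hcont : Continuous φ) (hsurj : Function.Surjective φ) :
    IsOpenMap φ := by
  obtain ⟨U, hUo, hUσ⟩ := exists_isOpen_isSigmaCompact_subgroup G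
  have hPo : IsOpen (U.map φ : Set H) :=
    Subgroup.isOpen_of_isSigmaCompact_of_mk_lt_continuum (by simpa using hUσ.image hcont)
      (hG.mk_lt_continuum_of_isLocallyConstant (φ.isLocallyConstant_mk_map hUo)
        (QuotientGroup.mk_surjective.comp hsurj))
  have : SigmaCompactSpace U := isSigmaCompact_iff_sigmaCompactSpace.1 hUσ
  have : LocallyCompactSpace (U.map φ) := hPo.locallyCompactSpace
  have hφU : IsOpenMap (φ.subgroupMap U) := (φ.subgroupMap U).isOpenMap_of_sigmaCompact
    (φ.subgroupMap_surjective U) ((hcont.comp continuous_subtype_val).subtype_mk _)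
  exact φ.isOpenMap_of_isOpenMap_comp_subtype (hPo.isOpenMap_subtype_val.comp hφU)

theorem open_mapping_lt_continuum_compact
    {G H : Type*} [TopologicalSpace G] [Group G] [IsTopologicalGroup G]
    [LocallyCompactSpace G] [T2Space G]
    [TopologicalSpace H] [Group H] [IsTopologicalGroup H]
    [LocallyCompactSpace H] [T2Space H]
    (hG : SigmaCompactLtContinuum G)
    (φ : G →* H) (hcont : Continuous φ) (hsurj : Function.Surjective φ) :
    IsOpenMap φ :=
  open_mapping_lt_continuum_compact_general hG φ hcont hsurj
end

section
/- Let G and H be connected (real) Lie groups and φ : G → H a continuous group homomorphism such that the index of the image φ(G) in H (as an abstract subgroup) is strictly less than 𝔠 = 2^ℵ₀. Then φ is surjective. -/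
/-!
The image `φ(G)` is σ-compact, since a connected locally compact group is the union of the powers
of a compact symmetric neighbourhood of `1`. If `φ(G)` has an interior point it is an open, hence
clopen, subgroup of the connected group `H`, so it is all of `H`. Otherwise `φ(G)` is meagre:
it misses a decreasing sequence of dense open sets `U n`. Refining a nonempty compact set into
`2 ^ n` compact cells at level `n`, with `a⁻¹ * b ∈ U n` whenever `a` and `b` lie in distinct
cells of level `n + 1`, gives a Cantor set of points in pairwise distinct cosets of `φ(G)`.
-/

open Set Filter Topology Pointwise Cardinal

section Separation

variable {H : Type*} [Group H] [TopologicalSpace H] [IsTopologicalGroup H] {ι : Type*} [Finite ι]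

theorem exists_pairwise_inv_mul_mem {O : ι → Set H} (hOo : ∀ i, IsOpen (O i))
    (hOne : ∀ i, (O i).Nonempty) {U : Set H} (hUo : IsOpen U) (hUd : Dense U) :
    ∃ x : ι → H, (∀ i, x i ∈ O i) ∧ Pairwise fun i j ↦ (x i)⁻¹ * x j ∈ U := by
  classical
  cases nonempty_fintype ι
  -- for symmetric `V`, a new point `z` is separated from `x j` in both orders once `z ∈ x j • V`
  set V := U ∩ U⁻¹
  have hVo : IsOpen V := hUo.inter hUo.inv
  have hVd : Dense V := hUd.inter_of_isOpen_left (hUd.preimage (Homeomorph.inv H).isOpenMap) hUo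
  have hVinv : V⁻¹ = V := by simp only [V, inter_inv, inv_inv, inter_comm]
  suffices ∀ s : Finset ι, ∃ x : ι → H, (∀ i, x i ∈ O i) ∧
      ∀ i ∈ s, ∀ j ∈ s, i ≠ j → (x i)⁻¹ * x j ∈ V by
    obtain ⟨x, hxO, hx⟩ := this Finset.univ
    exact ⟨x, hxO, fun i j hij ↦ (hx i (Finset.mem_univ _) j (Finset.mem_univ _) hij).1⟩
  intro s
  induction s using Finset.induction with
  | empty => choose x hx using hOne; exact ⟨x, hx, by simp⟩
  | insert a s ha ih =>
    obtain ⟨x, hxO, hx⟩ := ih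
    have hT : Dense (⋂ j ∈ s, x j • V) := by
      rw [← Finset.set_biInter_coe, ← sInter_image]
      refine (s.finite_toSet.image _).dense_sInter ?_ ?_ <;> rintro _ ⟨j, -, rfl⟩
      exacts [hVo.smul _, hVd.smul _]
    obtain ⟨z, hzO, hzT⟩ := hT.inter_open_nonempty (O a) (hOo a) (hOne a)
    have hz : ∀ j ∈ s, (x j)⁻¹ * z ∈ V := fun j hj ↦ by
      simpa [mem_smul_set_iff_inv_smul_mem] using mem_iInter₂.1 hzT j hj
    have hz' : ∀ j ∈ s, z⁻¹ * x j ∈ V := fun j hj ↦ by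
      rw [← hVinv, Set.mem_inv, mul_inv_rev, inv_inv]; exact hz j hj
    refine ⟨Function.update x a z, fun i ↦ ?_, ?_⟩
    · rcases eq_or_ne i a with rfl | h
      · simpa using hzO
      · simpa [h] using hxO i
    · intro i hi j hj hij
      have hne : ∀ k ∈ s, k ≠ a := fun k hk h ↦ ha (h ▸ hk)
      rw [Finset.mem_insert] at hi hj
      rcases hi with rfl | hi <;> rcases hj with rfl | hj
      · exact absurd rfl hij
      · simpa [hne j hj] using hz' j hj
      · simpa [hne i hi] using hz i hi
      · simpa [hne i hi, hne j hj] using hx i hi j hj hij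

theorem exists_nhds_pairwise_inv_mul_subset {x : ι → H} {U : Set H} (hUo : IsOpen U)
    (hx : Pairwise fun i j ↦ (x i)⁻¹ * x j ∈ U) :
    ∃ N : ι → Set H, (∀ i, N i ∈ 𝓝 (x i)) ∧ Pairwise fun i j ↦ (N i)⁻¹ * N j ⊆ U := by
  have hpair : ∀ i j, i ≠ j → ∃ A ∈ 𝓝 (x i), ∃ B ∈ 𝓝 (x j), A⁻¹ * B ⊆ U := by
    intro i j hij
    have : ∀ᶠ p in 𝓝 (x i) ×ˢ 𝓝 (x j), p.1⁻¹ * p.2 ∈ U := by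
      rw [← nhds_prod_eq]
      exact (continuous_fst.inv.mul continuous_snd).continuousAt.eventually
        (hUo.mem_nhds (hx hij))
    obtain ⟨A, hA, B, hB, hAB⟩ := mem_prod_iff.1 this
    refine ⟨A, hA, B, hB, Set.mul_subset_iff.2 fun a ha b hb ↦ ?_⟩
    simpa using hAB (mk_mem_prod (mem_inv.1 ha) hb)
  choose A hA B hB hAB using hpair
  refine ⟨fun i ↦ ⋂ (j) (h : i ≠ j), A i j h ∩ B j i h.symm, fun i ↦ ?_, fun i j hij ↦ ?_⟩
  · exact iInter_mem.2 fun j ↦ iInter_mem.2 fun h ↦ inter_mem (hA i j h) (hB j i h.symm)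
  · refine (mul_subset_mul (inv_subset_inv.2 ?_) ?_).trans (hAB i j hij)
    · exact (iInter₂_subset j hij).trans inter_subset_left
    · exact (iInter₂_subset i hij.symm).trans inter_subset_right

theorem exists_isCompact_pairwise_inv_mul_subset [WeaklyLocallyCompactSpace H]
    {O : ι → Set H} (hOo : ∀ i, IsOpen (O i)) (hOne : ∀ i, (O i).Nonempty) {U : Set H}
    (hUo : IsOpen U) (hUd : Dense U) :
    ∃ C : ι → Set H,
      (∀ i, IsCompact (C i) ∧ IsClosed (C i) ∧ (interior (C i)).Nonempty ∧ C i ⊆ O i) ∧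
        Pairwise fun i j ↦ (C i)⁻¹ * C j ⊆ U := by
  obtain ⟨x, hxO, hx⟩ := exists_pairwise_inv_mul_mem hOo hOne hUo hUd
  obtain ⟨N, hN, hNU⟩ := exists_nhds_pairwise_inv_mul_subset hUo hx
  have hC : ∀ i, ∃ C, (C ∈ 𝓝 (x i) ∧ IsCompact C ∧ IsClosed C) ∧ C ⊆ N i ∩ O i := fun i ↦
    (isCompact_isClosed_basis_nhds (x i)).mem_iff.1 (inter_mem (hN i) ((hOo i).mem_nhds (hxO i)))
  choose C hC hCsub using hC
  refine ⟨C, fun i ↦ ⟨(hC i).2.1, (hC i).2.2, ⟨x i, mem_interior_iff_mem_nhds.2 (hC i).1⟩,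
    (hCsub i).trans inter_subset_right⟩, fun i j hij ↦ ?_⟩
  exact (mul_subset_mul (inv_subset_inv.2 ((hCsub i).trans inter_subset_left))
    ((hCsub j).trans inter_subset_left)).trans (hNU hij)

end Separation

theorem exists_seq_of_forall_exists_succ {α : ℕ → Type*} {P : ∀ n, α n → Prop}
    {Q : ∀ n, α n → α (n + 1) → Prop} (h₀ : ∃ a, P 0 a)
    (h : ∀ n a, P n a → ∃ b, P (n + 1) b ∧ Q n a b) :
    ∃ f : ∀ n, α n, ∀ n, P n (f n) ∧ Q n (f n) (f (n + 1)) := by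
  choose next hnext using h
  let g : ∀ n, {a // P n a} := fun n ↦
    Nat.rec ⟨h₀.choose, h₀.choose_spec⟩ (fun n a ↦ ⟨next n a.1 a.2, (hnext n a.1 a.2).1⟩) n
  exact ⟨fun n ↦ (g n).1, fun n ↦ ⟨(g n).2, (hnext n (g n).1 (g n).2).2⟩⟩

section Cantor

variable {H : Type*} [Group H] [TopologicalSpace H] [IsTopologicalGroup H]
  [WeaklyLocallyCompactSpace H]

theorem exists_cantor_pairwise_inv_mul_mem {U : ℕ → Set H} (hUa : Antitone U)
    (hUo : ∀ n, IsOpen (U n)) (hUd : ∀ n, Dense (U n)) :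
    ∃ y : (ℕ → Bool) → H, Pairwise fun σ τ ↦ ∀ n, (y σ)⁻¹ * y τ ∈ U n := by
  obtain ⟨c, hc⟩ := exists_seq_of_forall_exists_succ
    (P := fun n (c : (Fin n → Bool) → Set H) ↦
      ∀ s, IsCompact (c s) ∧ IsClosed (c s) ∧ (interior (c s)).Nonempty)
    (Q := fun n c c' ↦ (∀ s, c' s ⊆ c (Fin.init s)) ∧ Pairwise fun s t ↦ (c' s)⁻¹ * c' t ⊆ U n)
    (by
      obtain ⟨K, hK, hKc, hKcl⟩ := exists_mem_nhds_isCompact_isClosed (1 : H)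
      exact ⟨fun _ ↦ K, fun _ ↦ ⟨hKc, hKcl, 1, mem_interior_iff_mem_nhds.2 hK⟩⟩)
    (fun n c hc ↦ by
      obtain ⟨C, hC, hCU⟩ := exists_isCompact_pairwise_inv_mul_subset
        (O := fun s : Fin (n + 1) → Bool ↦ interior (c (Fin.init s))) (fun _ ↦ isOpen_interior)
        (fun s ↦ (hc (Fin.init s)).2.2) (hUo n) (hUd n)
      exact ⟨C, fun s ↦ ⟨(hC s).1, (hC s).2.1, (hC s).2.2.1⟩,
        fun s ↦ (hC s).2.2.2.trans interior_subset, hCU⟩)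
  let D : (ℕ → Bool) → ℕ → Set H := fun σ n ↦ c n fun i ↦ σ i
  have hD : ∀ σ, (⋂ n, D σ n).Nonempty := fun σ ↦
    IsCompact.nonempty_iInter_of_sequence_nonempty_isCompact_isClosed _
      (fun n ↦ (hc n).2.1 _) (fun n ↦ ((hc n).1 _).2.2.mono interior_subset)
      ((hc 0).1 _).1 (fun n ↦ ((hc n).1 _).2.1)
  choose y hy using hD
  refine ⟨y, fun σ τ hστ m ↦ ?_⟩
  obtain ⟨j, hj⟩ := Function.ne_iff.1 hστ
  set n := max m j
  have hne : (fun i : Fin (n + 1) ↦ σ i) ≠ fun i : Fin (n + 1) ↦ τ i := fun h ↦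
    hj (congrFun h ⟨j, by omega⟩)
  exact hUa (le_max_left m j) <| (hc n).2.2 hne <|
    mul_mem_mul (inv_mem_inv.2 (mem_iInter.1 (hy σ) (n + 1))) (mem_iInter.1 (hy τ) (n + 1))

end Cantor

theorem exists_antitone_isOpen_dense_of_mem_residual {X : Type*} [TopologicalSpace X]
    [BaireSpace X] {s : Set X} (hs : s ∈ residual X) :
    ∃ U : ℕ → Set X, Antitone U ∧ (∀ n, IsOpen (U n)) ∧ (∀ n, Dense (U n)) ∧ ⋂ n, U n ⊆ s := by
  obtain ⟨t, hts, htG, htd⟩ := mem_residual.1 hs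
  obtain ⟨f, hfo, rfl⟩ := isGδ_iff_eq_iInter_nat.1 htG
  refine ⟨fun n ↦ ⋂ m ∈ Iic n, f m, fun n n' h ↦ biInter_mono (Iic_subset_Iic.2 h) fun _ _ ↦ le_rfl,
    fun n ↦ (finite_Iic n).isOpen_biInter fun m _ ↦ hfo m,
    fun n ↦ htd.mono (subset_iInter₂ fun m _ ↦ iInter_subset f m), ?_⟩
  exact (iInter_mono fun n ↦ biInter_subset_of_mem self_mem_Iic).trans hts

theorem Subgroup.continuum_le_mk_quotient_of_isMeagre {H : Type*} [Group H] [TopologicalSpace H]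
    [IsTopologicalGroup H] [WeaklyLocallyCompactSpace H] {K : Subgroup H}
    (hK : IsMeagre (K : Set H)) : 𝔠 ≤ #(H ⧸ K) := by
  obtain ⟨U, hUa, hUo, hUd, hUK⟩ := exists_antitone_isOpen_dense_of_mem_residual hK
  obtain ⟨y, hy⟩ := exists_cantor_pairwise_inv_mul_mem hUa hUo hUd
  have hinj : Function.Injective fun σ ↦ (y σ : H ⧸ K) := by
    intro σ τ hστ
    by_contra hne
    exact hUK (mem_iInter.2 (hy hne)) (QuotientGroup.eq.1 hστ)
  simpa using lift_mk_le_lift_mk_of_injective hinj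

theorem IsSigmaCompact.isMeagre_of_interior_eq_empty {X : Type*} [TopologicalSpace X]
    [T2Space X] {s : Set X} (hs : IsSigmaCompact s) (hint : interior s = ∅) : IsMeagre s := by
  obtain ⟨K, hK, rfl⟩ := hs
  refine isMeagre_iUnion fun n ↦ IsNowhereDense.isMeagre ?_
  rw [(hK n).isClosed.isNowhereDense_iff, ← subset_empty_iff, ← hint]
  exact interior_mono (subset_iUnion K n)

theorem Subgroup.eq_top_of_isOpen {G : Type*} [Group G] [TopologicalSpace G]
    [IsTopologicalGroup G] [ConnectedSpace G] {K : Subgroup G} (hK : IsOpen (K : Set G)) :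
    K = ⊤ :=
  SetLike.coe_injective <| IsClopen.eq_univ ⟨K.isClosed_of_isOpen hK, hK⟩ ⟨1, K.one_mem⟩

theorem IsTopologicalGroup.sigmaCompactSpace_of_connectedSpace {G : Type*} [Group G]
    [TopologicalSpace G] [IsTopologicalGroup G] [ConnectedSpace G] [WeaklyLocallyCompactSpace G] :
    SigmaCompactSpace G := by
  obtain ⟨L, hLc, hL⟩ := exists_compact_mem_nhds (1 : G)
  have hpow : ∀ n, IsCompact ((L ∪ L⁻¹) ^ n) := fun n ↦ by
    induction n with
    | zero => simp
    | succ n ih => rw [pow_succ]; exact ih.mul (hLc.union hLc.inv)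
  refine ⟨⟨fun n ↦ (L ∪ L⁻¹) ^ n, hpow, iUnion_eq_univ_iff.2 fun x ↦ ?_⟩⟩
  have hx : x ∈ (Subgroup.closure L).toSubmonoid := by
    rw [Subgroup.eq_top_of_isOpen (Subgroup.isOpen_of_mem_nhds _
      (mem_of_superset hL Subgroup.subset_closure))]
    trivial
  rw [Subgroup.closure_toSubmonoid] at hx
  induction hx using Submonoid.closure_induction with
  | mem x hx => exact ⟨1, by simpa using hx⟩
  | one => exact ⟨0, by simp⟩
  | mul x y _ _ hx hy =>
    obtain ⟨m, hm⟩ := hx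
    obtain ⟨k, hk⟩ := hy
    exact ⟨m + k, pow_add (L ∪ L⁻¹) m k ▸ mul_mem_mul hm hk⟩

theorem surjective_of_index_lt_continuum_general
    {E F : Type*} [NormedAddCommGroup E] [NormedSpace ℝ E] [FiniteDimensional ℝ E]
    [NormedAddCommGroup F] [NormedSpace ℝ F] [FiniteDimensional ℝ F]
    {G H : Type*} [TopologicalSpace G] [ChartedSpace E G] [Group G]
    [IsTopologicalGroup G] [ConnectedSpace G]
    [TopologicalSpace H] [ChartedSpace F H] [Group H]
    [IsTopologicalGroup H] [ConnectedSpace H]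
    (φ : G →* H) (hcont : Continuous φ)
    (hindex : Cardinal.mk (H ⧸ φ.range) < Cardinal.continuum) :
    Function.Surjective φ := by
  have := ChartedSpace.locallyCompactSpace E G
  have := ChartedSpace.locallyCompactSpace F H
  have := ChartedSpace.t1Space F H
  have := IsTopologicalGroup.sigmaCompactSpace_of_connectedSpace (G := G)
  have hσ : IsSigmaCompact (φ.range : Set H) := φ.coe_range ▸ isSigmaCompact_range hcont
  have hopen : IsOpen (φ.range : Set H) := by
    by_contra hnot
    have hint : interior (φ.range : Set H) = ∅ := eq_empty_iff_forall_notMem.2 fun x hx ↦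
      hnot (Subgroup.isOpen_of_mem_nhds _ (mem_interior_iff_mem_nhds.1 hx))
    exact hindex.not_ge <|
      Subgroup.continuum_le_mk_quotient_of_isMeagre (hσ.isMeagre_of_interior_eq_empty hint)
  exact MonoidHom.range_eq_top.1 (Subgroup.eq_top_of_isOpen hopen)

theorem surjective_of_index_lt_continuum
    {E F : Type*} [NormedAddCommGroup E] [NormedSpace ℝ E] [FiniteDimensional ℝ E]
    [NormedAddCommGroup F] [NormedSpace ℝ F] [FiniteDimensional ℝ F]
    {G H : Type*} [TopologicalSpace G] [ChartedSpace E G] [Group G]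
    [IsTopologicalGroup G] [LieGroup (modelWithCornersSelf ℝ E) (⊤ : ℕ∞) G] [ConnectedSpace G]
    [TopologicalSpace H] [ChartedSpace F H] [Group H]
    [IsTopologicalGroup H] [LieGroup (modelWithCornersSelf ℝ F) (⊤ : ℕ∞) H] [ConnectedSpace H]
    (φ : G →* H) (hcont : Continuous φ)
    (hindex : Cardinal.mk (H ⧸ φ.range) < Cardinal.continuum) :
    Function.Surjective φ :=
  surjective_of_index_lt_continuum_general (E := E) (F := F) φ hcont hindex
end
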